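/- arXiv:1308.4260 — 2 statements merged into one kernel-verified Lean document; each statement's English description precedes it below -/
import Mathlib

section
/- Let S be a uniformly recurrent connected set over a finite alphabet A with A ⊆ S. Then for any w in S, the set R_S(w) of first right return words to w generates the free group F_A on A. -/
open List

/-- `u` is a factor of `v`. -/
def IsFactor {A : Type*} (u v : List A) : Prop := ∃ p s : List A, v = p ++ u ++ s

/-- A set of words is factorial if it contains the factors of its elements. -/
def Factorial {A : Type*} (S : Set (List A)) : Prop :=
  ∀ v ∈ S, ∀ u : List A, IsFactor u v → u ∈ S

/-- Left extensions of `w` in `S` taken inside the set `U`. -/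
def leftExts {A : Type*} (S U : Set (List A)) (w : List A) : Set (List A) :=
  {l | l ∈ U ∧ l ++ w ∈ S}

/-- Right extensions of `w` in `S` taken inside the set `V`. -/
def rightExts {A : Type*} (S V : Set (List A)) (w : List A) : Set (List A) :=
  {r | r ∈ V ∧ w ++ r ∈ S}

/-- The generalized extension graph `E_{U,V}(w)`: a bipartite undirected graph on the
disjoint union of `U(w)` and `V(w)`, with an edge between `l` and `r` iff `l ++ w ++ r ∈ S`. -/
def ExtGraph {A : Type*} (S U V : Set (List A)) (w : List A) :
    SimpleGraph (↥(leftExts S U w) ⊕ ↥(rightExts S V w)) where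
  Adj x y :=
    (∃ l r, x = Sum.inl l ∧ y = Sum.inr r ∧ l.val ++ w ++ r.val ∈ S) ∨
    (∃ l r, x = Sum.inr r ∧ y = Sum.inl l ∧ l.val ++ w ++ r.val ∈ S)
  symm := by
    constructor
    rintro x y (⟨l, r, hx, hy, h⟩ | ⟨l, r, hx, hy, h⟩)
    · exact Or.inr ⟨l, r, hy, hx, h⟩
    · exact Or.inl ⟨l, r, hy, hx, h⟩
  loopless := by
    constructor
    rintro x (⟨l, r, hx, hy, _⟩ | ⟨l, r, hx, hy, _⟩) <;> subst hx <;> simp at hy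

/-- The set of one-letter words. -/
def letterWords (A : Type*) : Set (List A) := Set.range fun a : A => [a]

/-- The extension graph `E(w)` of `w` in `S` (extensions by letters). -/
def EGraph {A : Type*} (S : Set (List A)) (w : List A) :=
  ExtGraph S (letterWords A) (letterWords A) w

/-- `S` is biextendable: factorial and every word extends on both sides by a letter. -/
def Biext {A : Type*} (S : Set (List A)) : Prop :=
  Factorial S ∧ ∀ w ∈ S, ∃ a b : A, a :: (w ++ [b]) ∈ S

/-- `S` is an acyclic set. -/
def SAcyclic {A : Type*} (S : Set (List A)) : Prop :=
  Biext S ∧ ∀ w ∈ S, (EGraph S w).IsAcyclic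

/-- `S` is a connected set. -/
def SConn {A : Type*} (S : Set (List A)) : Prop :=
  Biext S ∧ ∀ w ∈ S, (EGraph S w).Connected

/-- `S` is a tree set. -/
def STree {A : Type*} (S : Set (List A)) : Prop :=
  Biext S ∧ ∀ w ∈ S, (EGraph S w).IsTree

/-- A prefix code: nonempty words, none a proper prefix of another. -/
def IsPrefixCode {A : Type*} (X : Set (List A)) : Prop :=
  (∀ x ∈ X, x ≠ []) ∧ ∀ x ∈ X, ∀ y ∈ X, x <+: y → x = y

/-- A suffix code: nonempty words, none a proper suffix of another. -/
def IsSuffixCode {A : Type*} (X : Set (List A)) : Prop :=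
  (∀ x ∈ X, x ≠ []) ∧ ∀ x ∈ X, ∀ y ∈ X, x <:+ y → x = y

/-- A bifix code. -/
def IsBifixCode {A : Type*} (X : Set (List A)) : Prop :=
  IsPrefixCode X ∧ IsSuffixCode X

/-- An `S`-maximal prefix code. -/
def IsSMaxPrefixCode {A : Type*} (S X : Set (List A)) : Prop :=
  IsPrefixCode X ∧ X ⊆ S ∧ ∀ Y : Set (List A), IsPrefixCode Y → Y ⊆ S → X ⊆ Y → X = Y

/-- An `S`-maximal suffix code. -/
def IsSMaxSuffixCode {A : Type*} (S X : Set (List A)) : Prop :=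
  IsSuffixCode X ∧ X ⊆ S ∧ ∀ Y : Set (List A), IsSuffixCode Y → Y ⊆ S → X ⊆ Y → X = Y

/-- An `S`-maximal bifix code. -/
def IsSMaxBifixCode {A : Type*} (S X : Set (List A)) : Prop :=
  IsBifixCode X ∧ X ⊆ S ∧ ∀ Y : Set (List A), IsBifixCode Y → Y ⊆ S → X ⊆ Y → X = Y

/-- The canonical embedding of words over `A` into the free group `F_A`. -/
def toFG {A : Type*} (w : List A) : FreeGroup A := (w.map FreeGroup.of).prod

/-- A subset of a group is free if it is a basis of the subgroup it generates, i.e. the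
induced morphism from the free group over it is injective. -/
def IsFreeSubset {G : Type*} [Group G] (X : Set G) : Prop :=
  Function.Injective ⇑(FreeGroup.lift fun x : X => (x : G))

/-- The submonoid `X*` of `A*` generated by `X`, as a set of words. -/
def star {A : Type*} (X : Set (List A)) : Set (List A) :=
  {w | ∃ l : List (List A), (∀ u ∈ l, u ∈ X) ∧ w = l.flatten}

/-- Every word of `S` is right-extendable by a letter. -/
def RightExtendable {A : Type*} (S : Set (List A)) : Prop :=
  ∀ w ∈ S, ∃ a : A, w ++ [a] ∈ S

/-- `S` is uniformly recurrent. -/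
def UnifRecurrent {A : Type*} (S : Set (List A)) : Prop :=
  RightExtendable S ∧
    ∀ u ∈ S, ∃ n : ℕ, 1 ≤ n ∧ ∀ v ∈ S, v.length = n → IsFactor u v

/-- `S` is recurrent. -/
def Recurrent {A : Type*} (S : Set (List A)) : Prop :=
  S ≠ {([] : List A)} ∧ Factorial S ∧ ∀ u ∈ S, ∀ w ∈ S, ∃ v ∈ S, u ++ v ++ w ∈ S

/-- The set `Γ_S(w)` of right return words to `w`. -/
def retWords {A : Type*} (S : Set (List A)) (w : List A) : Set (List A) :=
  {x | x ∈ S ∧ w ++ x ∈ S ∧ ∃ y : List A, y ≠ [] ∧ w ++ x = y ++ w}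

/-- The set `R_S(w)` of first right return words to `w`. -/
def firstRet {A : Type*} (S : Set (List A)) (w : List A) : Set (List A) :=
  {x | x ∈ retWords S w ∧ ¬ ∃ y ∈ retWords S w, ∃ z : List A, z ≠ [] ∧ x = y ++ z}

/-- The quantity `m(w) = e(w) - l(w) - r(w) + 1`. -/
noncomputable def mval {A : Type*} (S : Set (List A)) (w : List A) : ℤ :=
  (Set.ncard {p : A × A | p.1 :: (w ++ [p.2]) ∈ S} : ℤ)
    - (Set.ncard {a : A | a :: w ∈ S} : ℤ) - (Set.ncard {b : A | w ++ [b] ∈ S} : ℤ) + 1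

/-- A strong set: factorial and every word is strong or neutral. -/
def SStrong {A : Type*} (S : Set (List A)) : Prop :=
  Factorial S ∧ ∀ w ∈ S, 0 ≤ mval S w

/-- A weak set: factorial and every word is weak or neutral. -/
def SWeak {A : Type*} (S : Set (List A)) : Prop :=
  Factorial S ∧ ∀ w ∈ S, mval S w ≤ 0

/-- A neutral set: factorial and every word is neutral. -/
def SNeutral {A : Type*} (S : Set (List A)) : Prop :=
  Factorial S ∧ ∀ w ∈ S, mval S w = 0

/-!
Work in the Rauzy graphs of `S`: the vertices are the words of `S` of a fixed length, with an
edge `p → (p ++ [c]).tail` labelled `c` whenever `p ++ [c] ∈ S`. Let `K(v)` be the subgroup of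
`F_A` generated by the labels of the directed loops at `v`. Since `A ⊆ S`, `K(ε) = F_A`.
Uniform recurrence makes the Rauzy graphs strongly connected, so the label of any closed
undirected walk at `v` lies in `K(v)`; connectedness of the extension graph of `t` lifts a loop
at `t` to such a closed walk at `a :: t`. Hence `K(t) ≤ K(a :: t)`, and `K(v) = F_A` for all
`v ∈ S`. Finally pick `u ∈ S` ending with `w` and so long that every word of `S` of length
`|u|` contains `w`: the label of a loop at `u` factors into return words to `w`, hence into
first return words.
-/

section ReturnTheorem

variable {A : Type*} {S : Set (List A)}

@[simp] lemma toFG_nil : toFG ([] : List A) = 1 := rfl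

@[simp] lemma toFG_cons (c : A) (x : List A) : toFG (c :: x) = FreeGroup.of c * toFG x := by
  simp [toFG]

@[simp] lemma toFG_append (x y : List A) : toFG (x ++ y) = toFG x * toFG y := by
  simp [toFG]

lemma toFG_flatten (l : List (List A)) : toFG l.flatten = (l.map toFG).prod := by
  induction l with
  | nil => rfl
  | cons a l ih => simp [ih]

lemma tail_append_singleton_append (u x : List A) (c : A) :
    (u ++ [c]).tail ++ x = (u ++ c :: x).tail := by
  rw [← tail_append_of_ne_nil (by simp)]; simp

lemma Factorial.mem_of_infix (hf : Factorial S) {u v : List A} (hv : v ∈ S) (h : u <:+: v) :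
    u ∈ S := by
  obtain ⟨p, s, h⟩ := h
  exact hf v hv u ⟨p, s, h.symm⟩

lemma RightExtendable.exists_length_eq_append_mem (hre : RightExtendable S) (k : ℕ) {u : List A}
    (hu : u ∈ S) : ∃ z : List A, z.length = k ∧ u ++ z ∈ S := by
  induction k with
  | zero => exact ⟨[], rfl, by simpa using hu⟩
  | succ k ih =>
    obtain ⟨z, hz, hzS⟩ := ih
    obtain ⟨a, ha⟩ := hre _ hzS
    exact ⟨z ++ [a], by simp [hz], by rwa [← append_assoc]⟩

lemma Biext.exists_length_eq_append_mem (hb : Biext S) (k : ℕ) {u : List A} (hu : u ∈ S) :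
    ∃ z : List A, z.length = k ∧ z ++ u ∈ S := by
  induction k generalizing u with
  | zero => exact ⟨[], rfl, hu⟩
  | succ k ih =>
    obtain ⟨a, b, hab⟩ := hb.2 u hu
    obtain ⟨z, hz, hzS⟩ := ih (hb.1.mem_of_infix hab ⟨[], [b], by simp⟩ : a :: u ∈ S)
    exact ⟨z ++ [a], by simp [hz], by simpa using hzS⟩

lemma UnifRecurrent.exists_append_append_mem (hf : Factorial S) (hur : UnifRecurrent S)
    {u v : List A} (hu : u ∈ S) (hv : v ∈ S) : ∃ z, u ++ z ++ v ∈ S := by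
  obtain ⟨N, -, hN⟩ := hur.2 v hv
  obtain ⟨z, hz, hzS⟩ := hur.1.exists_length_eq_append_mem N hu
  obtain ⟨p, s, rfl⟩ := hN z (hf.mem_of_infix hzS (suffix_append _ _).isInfix) hz
  exact ⟨p, hf.mem_of_infix hzS ⟨[], s, by simp⟩⟩

lemma UnifRecurrent.exists_length_forall_isFactor (hf : Factorial S) (hur : UnifRecurrent S)
    {w : List A} (hw : w ∈ S) :
    ∃ m, w.length ≤ m ∧ ∀ v ∈ S, v.length = m → IsFactor w v := by
  obtain ⟨N, -, hN⟩ := hur.2 w hw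
  refine ⟨max N w.length, le_max_right _ _, fun v hv hlen => ?_⟩
  obtain ⟨p, s, h⟩ := hN (v.take N) (hf.mem_of_infix hv (take_prefix _ _).isInfix)
    (by simp [hlen])
  refine ⟨p, s ++ v.drop N, ?_⟩
  conv_lhs => rw [← take_append_drop N v, h]
  simp

/-! ### Rauzy graphs -/

def RauzyEdge (S : Set (List A)) (p q : List A) (c : A) : Prop :=
  p ++ [c] ∈ S ∧ q = (p ++ [c]).tail

def RauzyPath (S : Set (List A)) : List A → List A → List A → Prop
  | u, v, [] => v = u
  | u, v, c :: x => ∃ q, RauzyEdge S u q c ∧ RauzyPath S q v x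

inductive RauzyWalk (S : Set (List A)) (v : List A) : List A → FreeGroup A → Prop
  | refl : RauzyWalk S v v 1
  | forward {u q c g} : RauzyWalk S v u g → RauzyEdge S u q c →
      RauzyWalk S v q (g * FreeGroup.of c)
  | backward {u p c g} : RauzyWalk S v u g → RauzyEdge S p u c →
      RauzyWalk S v p (g * (FreeGroup.of c)⁻¹)

def loopGroup (S : Set (List A)) (v : List A) : Subgroup (FreeGroup A) :=
  Subgroup.closure (toFG '' {x | RauzyPath S v v x})

namespace RauzyEdge

variable {p q : List A} {c : A}

lemma mem_left (hf : Factorial S) (h : RauzyEdge S p q c) : p ∈ S :=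
  hf.mem_of_infix h.1 (prefix_append _ _).isInfix

lemma mem_right (hf : Factorial S) (h : RauzyEdge S p q c) : q ∈ S :=
  h.2 ▸ hf.mem_of_infix h.1 (tail_suffix _).isInfix

lemma length_eq (h : RauzyEdge S p q c) : q.length = p.length := by
  rw [h.2]; simp

end RauzyEdge

namespace RauzyPath

lemma append {u v v' x y : List A} (hx : RauzyPath S u v x) (hy : RauzyPath S v v' y) :
    RauzyPath S u v' (x ++ y) := by
  induction x generalizing u with
  | nil =>
    have hvu : v = u := hx
    exact hvu ▸ hy
  | cons c x ih =>
    obtain ⟨q, he, hq⟩ := hx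
    exact ⟨q, he, ih hq⟩

lemma eq_drop {u v x : List A} (h : RauzyPath S u v x) : v = (u ++ x).drop x.length := by
  induction x generalizing u with
  | nil =>
    have hvu : v = u := h
    simp [hvu]
  | cons c x ih =>
    obtain ⟨q, he, hq⟩ := h
    rw [ih hq, he.2, tail_append_singleton_append, ← drop_one, drop_drop]
    simp [Nat.add_comm]

lemma isSuffix {u v x : List A} (h : RauzyPath S u v x) : v <:+ u ++ x :=
  h.eq_drop ▸ drop_suffix _ _

lemma of_append_mem (hf : Factorial S) {u x : List A} (h : u ++ x ∈ S) :
    RauzyPath S u ((u ++ x).drop x.length) x := by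
  induction x generalizing u with
  | nil => simp [RauzyPath]
  | cons c x ih =>
    have hc : u ++ [c] ∈ S := hf.mem_of_infix h ⟨[], x, by simp⟩
    have hq : (u ++ [c]).tail ++ x ∈ S := by
      rw [tail_append_singleton_append]
      exact hf.mem_of_infix h (tail_suffix _).isInfix
    refine ⟨_, ⟨hc, rfl⟩, ?_⟩
    convert ih hq using 1
    rw [tail_append_singleton_append, ← drop_one, drop_drop]
    simp [Nat.add_comm]

/-- The words of length at most `|u| + 1` read along a path from `u` are the vertices and edges
it visits, so they lie in `S`. -/
lemma mem_of_infix (hf : Factorial S) {u v x f : List A} (h : RauzyPath S u v x) (hu : u ∈ S)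
    (hfx : f <:+: u ++ x) (hlen : f.length ≤ u.length + 1) : f ∈ S := by
  induction x generalizing u with
  | nil => exact hf.mem_of_infix hu (by simpa using hfx)
  | cons c x ih =>
    obtain ⟨q, he, hq⟩ := h
    obtain ⟨p, s, hps⟩ := hfx
    cases p with
    | nil =>
      have hpre : f <+: u ++ [c] :=
        prefix_of_prefix_length_le ⟨s, by simpa using hps⟩ ⟨x, by simp⟩ (by simpa using hlen)
      exact hf.mem_of_infix he.1 hpre.isInfix
    | cons d p =>
      refine ih hq (he.mem_right hf) ⟨p, s, ?_⟩ (by rw [he.length_eq]; exact hlen)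
      rw [he.2, tail_append_singleton_append, ← hps]
      simp

end RauzyPath

lemma UnifRecurrent.exists_rauzyPath (hf : Factorial S) (hur : UnifRecurrent S)
    {p q : List A} (hp : p ∈ S) (hq : q ∈ S) (hl : p.length = q.length) :
    ∃ x, RauzyPath S p q x := by
  obtain ⟨z, hz⟩ := hur.exists_append_append_mem hf hp hq
  refine ⟨z ++ q, ?_⟩
  convert RauzyPath.of_append_mem hf (u := p) (x := z ++ q) (by simpa using hz) using 1
  rw [← append_assoc, show (z ++ q).length = (p ++ z).length by simp [hl, Nat.add_comm]]
  exact drop_left.symm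

namespace RauzyWalk

lemma trans {v u u' : List A} {g k : FreeGroup A} (h1 : RauzyWalk S v u g)
    (h2 : RauzyWalk S u u' k) : RauzyWalk S v u' (g * k) := by
  induction h2 with
  | refl => simpa using h1
  | forward _ he ih => rw [← mul_assoc]; exact ih.forward he
  | backward _ he ih => rw [← mul_assoc]; exact ih.backward he

lemma length_eq {v u : List A} {g : FreeGroup A} (h : RauzyWalk S v u g) :
    u.length = v.length := by
  induction h with
  | refl => rfl
  | forward _ he ih => rw [he.length_eq, ih]
  | backward _ he ih => rw [← he.length_eq, ih]

lemma of_edge {p q : List A} {c : A} (h : RauzyEdge S p q c) :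
    RauzyWalk S p q (FreeGroup.of c) := by
  simpa using refl.forward h

lemma of_edge_symm {p q : List A} {c : A} (h : RauzyEdge S p q c) :
    RauzyWalk S q p (FreeGroup.of c)⁻¹ := by
  simpa using refl.backward h

/-- A backward edge `p → u` is rewritten, through directed paths `v ⇝ p` and `u ⇝ v` given by
strong connectivity, as a quotient of two directed loops at `v`. -/
lemma mul_mem_loopGroup (hf : Factorial S) (hur : UnifRecurrent S) {v u : List A}
    {g : FreeGroup A} (hv : v ∈ S) (h : RauzyWalk S v u g) {x : List A}
    (hx : RauzyPath S u v x) : g * toFG x ∈ loopGroup S v := by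
  have loop_mem {y : List A} (hy : RauzyPath S v v y) : toFG y ∈ loopGroup S v :=
    Subgroup.subset_closure ⟨y, hy, rfl⟩
  induction h generalizing x with
  | refl => simpa using loop_mem hx
  | forward _ he ih => simpa [mul_assoc] using ih (x := _ :: x) ⟨_, he, hx⟩
  | @backward u p c g hw he ih =>
    have hlen : v.length = p.length := by rw [← hw.length_eq, he.length_eq]
    obtain ⟨s, hs⟩ := hur.exists_rauzyPath hf hv (he.mem_left hf) hlen
    obtain ⟨y, hy⟩ := hur.exists_rauzyPath hf (he.mem_right hf) hv (hw.length_eq)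
    have key : g * (FreeGroup.of c)⁻¹ * toFG x
        = (g * toFG y) * (toFG (s ++ c :: y))⁻¹ * toFG (s ++ x) := by
      simp only [toFG_append, toFG_cons]
      group
    rw [key]
    exact mul_mem (mul_mem (ih hy) (inv_mem (loop_mem (hs.append ⟨u, he, hy⟩))))
      (loop_mem (hs.append hx))

lemma mem_loopGroup (hf : Factorial S) (hur : UnifRecurrent S) {v : List A} {g : FreeGroup A}
    (hv : v ∈ S) (h : RauzyWalk S v v g) : g ∈ loopGroup S v := by
  simpa using h.mul_mem_loopGroup hf hur hv (x := []) rfl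

end RauzyWalk

/-! ### Lifting loops through extension graphs -/

section ExtensionGraph

variable {t : List A}

def extVertexWord (S : Set (List A)) (t : List A) :
    ↥(leftExts S (letterWords A) t) ⊕ ↥(rightExts S (letterWords A) t) → List A
  | Sum.inl l => l.val ++ t
  | Sum.inr r => t ++ r.val

def extVertexLabel (S : Set (List A)) (t : List A) :
    ↥(leftExts S (letterWords A) t) ⊕ ↥(rightExts S (letterWords A) t) → FreeGroup A
  | Sum.inl _ => 1
  | Sum.inr r => toFG r.val

/-- An edge `a — c` of `E(t)` is the Rauzy edge `a :: t → t ++ [c]` labelled `c`. -/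
lemma rauzyWalk_of_adj {ξ ζ : ↥(leftExts S (letterWords A) t) ⊕ ↥(rightExts S (letterWords A) t)}
    (h : (EGraph S t).Adj ξ ζ) :
    RauzyWalk S (extVertexWord S t ξ) (extVertexWord S t ζ)
      ((extVertexLabel S t ξ)⁻¹ * extVertexLabel S t ζ) := by
  rcases h with ⟨l, r, rfl, rfl, hlr⟩ | ⟨l, r, rfl, rfl, hlr⟩ <;>
  · obtain ⟨a, ha⟩ := l.2.1
    obtain ⟨c, hc⟩ := r.2.1
    have he : RauzyEdge S (l.val ++ t) (t ++ r.val) c := by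
      rw [← ha, ← hc] at hlr ⊢
      exact ⟨hlr, by simp⟩
    first
    | simpa [extVertexWord, extVertexLabel, ← hc] using RauzyWalk.of_edge he
    | simpa [extVertexWord, extVertexLabel, ← hc] using RauzyWalk.of_edge_symm he

lemma rauzyWalk_of_walk {ξ ζ : ↥(leftExts S (letterWords A) t) ⊕ ↥(rightExts S (letterWords A) t)}
    (p : (EGraph S t).Walk ξ ζ) :
    RauzyWalk S (extVertexWord S t ξ) (extVertexWord S t ζ)
      ((extVertexLabel S t ξ)⁻¹ * extVertexLabel S t ζ) := by
  induction p with
  | nil => simpa using RauzyWalk.refl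
  | cons h _ ih => simpa [mul_assoc] using (rauzyWalk_of_adj h).trans ih

lemma rauzyWalk_cons_append_singleton (ht : (EGraph S t).Connected) {a c : A}
    (ha : a :: t ∈ S) (hc : t ++ [c] ∈ S) :
    RauzyWalk S (a :: t) (t ++ [c]) (FreeGroup.of c) := by
  obtain ⟨p⟩ := ht.preconnected (Sum.inl ⟨[a], ⟨a, rfl⟩, ha⟩) (Sum.inr ⟨[c], ⟨c, rfl⟩, hc⟩)
  simpa [extVertexWord, extVertexLabel] using rauzyWalk_of_walk p

lemma rauzyWalk_cons_cons (ht : (EGraph S t).Connected) {a d : A}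
    (ha : a :: t ∈ S) (hd : d :: t ∈ S) : RauzyWalk S (a :: t) (d :: t) 1 := by
  obtain ⟨p⟩ := ht.preconnected (Sum.inl ⟨[a], ⟨a, rfl⟩, ha⟩) (Sum.inl ⟨[d], ⟨d, rfl⟩, hd⟩)
  simpa [extVertexWord, extVertexLabel] using rauzyWalk_of_walk p

end ExtensionGraph

lemma RauzyPath.exists_rauzyWalk_cons (hS : SConn S) {u u' x : List A}
    (hx : RauzyPath S u u' x) {b : A} (hb : b :: u ∈ S) :
    ∃ d, d :: u' ∈ S ∧ RauzyWalk S (b :: u) (d :: u') (toFG x) := by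
  induction x generalizing u b with
  | nil =>
    have hu : u' = u := hx
    exact ⟨b, hu ▸ hb, by simpa [hu] using RauzyWalk.refl⟩
  | cons c x ih =>
    obtain ⟨q, he, hq⟩ := hx
    have hu : u ∈ S := hS.1.1.mem_of_infix hb (suffix_cons _ _).isInfix
    obtain ⟨e, q', hcons⟩ := exists_cons_of_ne_nil (show u ++ [c] ≠ [] by simp)
    obtain rfl : q = q' := by rw [he.2, hcons, tail_cons]
    obtain ⟨d, hd, hw⟩ := ih hq (hcons ▸ he.1)
    refine ⟨d, hd, ?_⟩
    rw [toFG_cons]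
    exact (rauzyWalk_cons_append_singleton (hS.2 u hu) hb he.1).trans (hcons ▸ hw)

lemma loopGroup_le_loopGroup_cons (hS : SConn S) (hur : UnifRecurrent S) {a : A} {t : List A}
    (hat : a :: t ∈ S) : loopGroup S t ≤ loopGroup S (a :: t) := by
  have ht : t ∈ S := hS.1.1.mem_of_infix hat (suffix_cons _ _).isInfix
  rw [loopGroup, Subgroup.closure_le]
  rintro _ ⟨x, hx, rfl⟩
  obtain ⟨d, hd, hw⟩ := RauzyPath.exists_rauzyWalk_cons hS hx hat
  simpa using (hw.trans (rauzyWalk_cons_cons (hS.2 t ht) hd hat)).mem_loopGroup hS.1.1 hur hat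

lemma loopGroup_nil (hA : ∀ a : A, [a] ∈ S) : loopGroup S [] = ⊤ := by
  rw [eq_top_iff, ← FreeGroup.closure_range_of, Subgroup.closure_le]
  rintro _ ⟨a, rfl⟩
  exact Subgroup.subset_closure ⟨[a], ⟨[], ⟨by simpa using hA a, rfl⟩, rfl⟩, by simp⟩

lemma loopGroup_eq_top (hS : SConn S) (hur : UnifRecurrent S) (hA : ∀ a : A, [a] ∈ S)
    {v : List A} (hv : v ∈ S) : loopGroup S v = ⊤ := by
  induction v with
  | nil => exact loopGroup_nil hA
  | cons a t ih =>
    have ht : t ∈ S := hS.1.1.mem_of_infix hv (suffix_cons _ _).isInfix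
    exact top_le_iff.mp (ih ht ▸ loopGroup_le_loopGroup_cons hS hur hv)

/-! ### Return words -/

section Star

variable {X : Set (List A)}

lemma nil_mem_star : [] ∈ star X :=
  ⟨[], by simp, rfl⟩

lemma mem_star_of_mem {x : List A} (hx : x ∈ X) : x ∈ star X :=
  ⟨[x], by simpa using hx, by simp⟩

lemma append_mem_star {x y : List A} (hx : x ∈ star X) (hy : y ∈ star X) : x ++ y ∈ star X := by
  obtain ⟨l₁, h₁, rfl⟩ := hx
  obtain ⟨l₂, h₂, rfl⟩ := hy
  exact ⟨l₁ ++ l₂, fun u hu => (mem_append.1 hu).elim (h₁ u) (h₂ u), by simp⟩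

lemma toFG_mem_of_mem_star {H : Subgroup (FreeGroup A)} (h : ∀ y ∈ X, toFG y ∈ H) {x : List A}
    (hx : x ∈ star X) : toFG x ∈ H := by
  obtain ⟨l, hl, rfl⟩ := hx
  rw [toFG_flatten]
  exact Subgroup.list_prod_mem _ fun g hg => by
    obtain ⟨y, hy, rfl⟩ := mem_map.1 hg
    exact h y (hl y hy)

end Star

variable {w : List A}

lemma ne_nil_of_mem_retWords {x : List A} (hx : x ∈ retWords S w) : x ≠ [] := by
  obtain ⟨-, -, y, hy, h⟩ := hx
  rintro rfl
  exact hy (by simpa using h)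

lemma mem_retWords_of_isSuffix (hf : Factorial S) {x : List A} (hx : x ≠ []) (hwx : w ++ x ∈ S)
    (hsuf : w <:+ w ++ x) : x ∈ retWords S w := by
  obtain ⟨y, hy⟩ := hsuf
  refine ⟨hf.mem_of_infix hwx (suffix_append _ _).isInfix, hwx, y, ?_, hy.symm⟩
  rintro rfl
  exact hx (by simpa using hy)

lemma mem_retWords_of_append (hf : Factorial S) {y z : List A} (hyz : y ++ z ∈ retWords S w)
    (hy : y ∈ retWords S w) (hz : z ≠ []) : z ∈ retWords S w := by
  obtain ⟨-, hwyz, q, -, hq⟩ := hyz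
  obtain ⟨-, -, p, -, hp⟩ := hy
  have hsuf : w ++ z <:+ w ++ (y ++ z) := ⟨p, by rw [← append_assoc, ← hp, append_assoc]⟩
  exact mem_retWords_of_isSuffix hf hz (hf.mem_of_infix hwyz hsuf.isInfix)
    (suffix_of_suffix_length_le ⟨q, hq.symm⟩ hsuf (by simp))

lemma retWords_subset_star_firstRet (hf : Factorial S) : retWords S w ⊆ star (firstRet S w) := by
  intro x hx
  induction hn : x.length using Nat.strong_induction_on generalizing x with
  | _ n ih =>
  by_cases h : ∃ y ∈ retWords S w, ∃ z, z ≠ [] ∧ x = y ++ z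
  · obtain ⟨y, hy, z, hz, rfl⟩ := h
    have hy₀ := length_pos_iff.mpr (ne_nil_of_mem_retWords hy)
    have hz₀ := length_pos_iff.mpr hz
    simp only [length_append] at hn
    exact append_mem_star (ih _ (by omega) hy rfl)
      (ih _ (by omega) (mem_retWords_of_append hf hx hy hz) rfl)
  · exact mem_star_of_mem ⟨hx, h⟩

/-- When `w ++ x` is longer than `m + 1`, the window of length `m` starting at its second letter
contains `w`; this occurrence cuts off a return word. -/
lemma exists_mem_retWords_prefix (hf : Factorial S) {x : List A} {m : ℕ}
    (hm : ∀ v ∈ S, v.length = m → IsFactor w v)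
    (hfac : ∀ f, f <:+: w ++ x → f.length ≤ m + 1 → f ∈ S) (hsuf : w <:+ w ++ x) (hx : x ≠ []) :
    ∃ r s, x = r ++ s ∧ r ∈ retWords S w := by
  obtain ⟨y, s, hy, hlen, heq⟩ :
      ∃ y s, y ≠ [] ∧ (y ++ w).length ≤ m + 1 ∧ w ++ x = y ++ w ++ s := by
    by_cases hshort : (w ++ x).length ≤ m + 1
    · obtain ⟨y, hy⟩ := hsuf
      refine ⟨y, [], ?_, by rwa [hy], by simp [hy]⟩
      rintro rfl
      exact hx (by simpa using hy.symm)
    · obtain ⟨c, t, hct⟩ := exists_cons_of_ne_nil (show w ++ x ≠ [] by simp [hx])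
      have htlen : m < t.length := by
        have := congrArg length hct
        rw [length_cons] at this
        omega
      obtain ⟨p, s, hps⟩ := hm (t.take m)
        (hfac _ (hct ▸ (take_prefix m t).isInfix.trans (suffix_cons c t).isInfix)
          (by simp))
        (by simp; omega)
      refine ⟨c :: p, s ++ t.drop m, by simp, ?_, ?_⟩
      · have := congrArg length hps
        simp only [length_take, length_append, length_cons] at this ⊢
        omega
      · rw [hct]
        conv_lhs => rw [← take_append_drop m t, hps]
        simp
  rcases append_eq_append_iff.mp heq with ⟨r, hwr, rfl⟩ | ⟨r, hw, -⟩
  · refine ⟨r, s, rfl, mem_retWords_of_isSuffix hf ?_ ?_ ⟨y, hwr⟩⟩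
    · rintro rfl
      exact hy (by simpa using hwr)
    · exact hfac _ (IsPrefix.isInfix ⟨s, by simp⟩) (hwr ▸ hlen)
  · have := congrArg length hw
    simp only [length_append] at this
    exact absurd (length_pos_iff.mpr hy) (by omega)

lemma mem_star_retWords_of_forall_infix (hf : Factorial S) {m : ℕ}
    (hm : ∀ v ∈ S, v.length = m → IsFactor w v) {x : List A}
    (hfac : ∀ f, f <:+: w ++ x → f.length ≤ m + 1 → f ∈ S) (hsuf : w <:+ w ++ x) :
    x ∈ star (retWords S w) := by
  induction hn : x.length using Nat.strong_induction_on generalizing x with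
  | _ n ih =>
  rcases eq_or_ne x [] with rfl | hx
  · exact nil_mem_star
  obtain ⟨r, s, rfl, hr⟩ := exists_mem_retWords_prefix hf hm hfac hsuf hx
  obtain ⟨y, -, hwr⟩ := hr.2.2
  have hs : w ++ s <:+ w ++ (r ++ s) := ⟨y, by rw [← append_assoc, ← hwr, append_assoc]⟩
  have hr₀ := length_pos_iff.mpr (ne_nil_of_mem_retWords hr)
  simp only [length_append] at hn
  exact append_mem_star (mem_star_of_mem hr) (ih _ (by omega)
    (fun f hfs hlen => hfac f (hfs.trans hs.isInfix) hlen)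
    (suffix_of_suffix_length_le hsuf hs (by simp)) rfl)

lemma RauzyPath.mem_star_retWords (hf : Factorial S) {u x : List A}
    (hm : ∀ v ∈ S, v.length = u.length → IsFactor w v) (hu : u ∈ S) (hwu : w <:+ u)
    (hx : RauzyPath S u u x) : x ∈ star (retWords S w) := by
  obtain ⟨z, rfl⟩ := hwu
  have hsuf : w ++ x <:+ z ++ w ++ x := ⟨z, (append_assoc _ _ _).symm⟩
  refine mem_star_retWords_of_forall_infix hf hm
    (fun f hfx hlen => hx.mem_of_infix hf hu (hfx.trans hsuf.isInfix) hlen) ?_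
  exact suffix_of_suffix_length_le ((suffix_append z w).trans hx.isSuffix) hsuf (by simp)

end ReturnTheorem

theorem statement4_general {A : Type*} (S : Set (List A)) (hS : SConn S)
    (hur : UnifRecurrent S) (hA : ∀ a : A, [a] ∈ S) (w : List A) (hw : w ∈ S) :
    Subgroup.closure (toFG '' firstRet S w) = (⊤ : Subgroup (FreeGroup A)) := by
  have hf : Factorial S := hS.1.1
  obtain ⟨m, hwm, hm⟩ := hur.exists_length_forall_isFactor hf hw
  obtain ⟨z, hz, hzw⟩ := hS.1.exists_length_eq_append_mem (m - w.length) hw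
  have hlen : (z ++ w).length = m := by simp [hz]; omega
  rw [eq_top_iff, ← loopGroup_eq_top hS hur hA hzw, loopGroup, Subgroup.closure_le]
  rintro _ ⟨x, hx, rfl⟩
  have hret : ∀ y ∈ retWords S w, toFG y ∈ Subgroup.closure (toFG '' firstRet S w) :=
    fun y hy => toFG_mem_of_mem_star
      (fun r hr => Subgroup.subset_closure (Set.mem_image_of_mem toFG hr))
      (retWords_subset_star_firstRet hf hy)
  exact toFG_mem_of_mem_star hret (hx.mem_star_retWords hf (hlen ▸ hm) hzw (suffix_append z w))

/-- In a uniformly recurrent connected set containing the alphabet, every set of first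
right return words generates the free group on `A`. -/
theorem statement4 {A : Type*} [Fintype A] (S : Set (List A)) (hS : SConn S)
    (hur : UnifRecurrent S) (hA : ∀ a : A, [a] ∈ S) (w : List A) (hw : w ∈ S) :
    Subgroup.closure (toFG '' firstRet S w) = (⊤ : Subgroup (FreeGroup A)) :=
  statement4_general S hS hur hA w hw
end

section
/- Let S be a recurrent connected set over a finite alphabet A with A ⊆ S. For every n ≥ 0 and every vertex v of the Rauzy graph G_n(S) of order n, the group described by G_n(S) with respect to v is the whole free group F_A on A. -/
open List

/-- Edge of the Rauzy graph `G_n(S)`: `(x, a, y)` with `xa ∈ S ∩ Ay`. -/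
def RauzyAdj {A : Type*} (S : Set (List A)) (n : ℕ) (x : List A) (a : A) (y : List A) : Prop :=
  x ∈ S ∧ x.length = n ∧ y ∈ S ∧ y.length = n ∧ x ++ [a] ∈ S ∧ ∃ b : A, x ++ [a] = b :: y

/-- Generalized paths in the Rauzy graph `G_n(S)`, together with their label (an element of
the free group): edges may be traversed forward (label `a`) or backward (label `a⁻¹`). -/
inductive RauzyGPath {A : Type*} (S : Set (List A)) (n : ℕ) :
    List A → List A → FreeGroup A → Prop
  | nil (x : List A) (hx : x ∈ S) (hl : x.length = n) : RauzyGPath S n x x 1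
  | fwd {x y z : List A} {g : FreeGroup A} {a : A} :
      RauzyGPath S n x y g → RauzyAdj S n y a z → RauzyGPath S n x z (g * FreeGroup.of a)
  | bwd {x y z : List A} {g : FreeGroup A} {a : A} :
      RauzyGPath S n x y g → RauzyAdj S n z a y → RauzyGPath S n x z (g * (FreeGroup.of a)⁻¹)

/-!
Induction on `n`. The only vertex of `G_0(S)` is the empty word, with a loop labelled `a` for
every letter `a`. A generalized path of `G_n(S)` from `x` to `y` lifts, edge by edge, to one of
`G_{n+1}(S)` from `bx` to some `b'y` with the same label: every edge `x →a y` extends on the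
left since `S` is biextendable, and any two vertices `cw`, `c'w` of `G_{n+1}(S)` are joined by a
generalized path of label `1` because `E(w)` is connected. Closing the lifted loop with such a
path gives a loop at `bx` with the same label.
-/

section

variable {A : Type*} {S : Set (List A)}

namespace Factorial

lemma mem_of_append_left (hS : Factorial S) {u v : List A} (h : u ++ v ∈ S) : u ∈ S :=
  hS _ h u ⟨[], v, by simp⟩

lemma mem_of_append_right (hS : Factorial S) {u v : List A} (h : u ++ v ∈ S) : v ∈ S :=
  hS _ h v ⟨u, [], by simp⟩

end Factorial

namespace RauzyGPath

variable {n : ℕ} {x y z : List A} {g h : FreeGroup A}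

lemma trans (p : RauzyGPath S n x y g) (q : RauzyGPath S n y z h) :
    RauzyGPath S n x z (g * h) := by
  induction q with
  | nil => simpa using p
  | fwd _ hadj ih => simpa only [mul_assoc] using ih.fwd hadj
  | bwd _ hadj ih => simpa only [mul_assoc] using ih.bwd hadj

lemma single {a : A} (h : RauzyAdj S n x a y) : RauzyGPath S n x y (FreeGroup.of a) := by
  simpa using (nil x h.1 h.2.1).fwd h

lemma single_inv {a : A} (h : RauzyAdj S n x a y) : RauzyGPath S n y x (FreeGroup.of a)⁻¹ := by
  simpa using (nil y h.2.2.1 h.2.2.2.1).bwd h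

lemma symm (p : RauzyGPath S n x y g) : RauzyGPath S n y x g⁻¹ := by
  induction p with
  | nil hx hl => simpa using nil _ hx hl
  | fwd _ hadj ih => simpa using (single_inv hadj).trans ih
  | bwd _ hadj ih => simpa using (single hadj).trans ih

end RauzyGPath

lemma RauzyAdj.lift (hS : Biext S) {n : ℕ} {x y : List A} {a : A} (h : RauzyAdj S n x a y) :
    ∃ c d : A, RauzyAdj S (n + 1) (c :: x) a (d :: y) := by
  obtain ⟨-, hxn, -, hyn, hxa, d, hd⟩ := h
  obtain ⟨c, e, hcxae⟩ := hS.2 _ hxa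
  have hcxa : c :: (x ++ [a]) ∈ S := hS.1.mem_of_append_left (v := [e]) (by simpa using hcxae)
  refine ⟨c, d, ?_, by simp [hxn], hd ▸ hxa, by simp [hyn], hcxa, c, by simp [hd]⟩
  exact hS.1.mem_of_append_left (v := [a]) (by simpa)

lemma rauzyAdj_cons_append_singleton {w : List A} {c a : A} (hcw : c :: w ∈ S) (hwa : w ++ [a] ∈ S)
    (hcwa : c :: (w ++ [a]) ∈ S) : RauzyAdj S (w.length + 1) (c :: w) a (w ++ [a]) :=
  ⟨hcw, rfl, hwa, by simp, hcwa, c, rfl⟩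

section ExtensionGraph

variable (S) (w : List A)

/-- A walk in `E(w)` maps to a generalized path of `G_{|w|+1}(S)`: a left vertex `c` goes to
`cw`, a right vertex `a` to `wa`, and an edge `(c, a)` to the Rauzy edge `cw →a wa`. Along the
image of a walk the labels telescope, with `extLabel` as potential. -/
def extVertex : ↥(leftExts S (letterWords A) w) ⊕ ↥(rightExts S (letterWords A) w) → List A
  | Sum.inl l => l.val ++ w
  | Sum.inr r => w ++ r.val

def extLabel : ↥(leftExts S (letterWords A) w) ⊕ ↥(rightExts S (letterWords A) w) → FreeGroup A
  | Sum.inl _ => 1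
  | Sum.inr r => toFG r.val

variable {S w}

lemma extVertex_mem (x) : extVertex S w x ∈ S := by
  rcases x with l | r
  exacts [l.prop.2, r.prop.2]

lemma length_extVertex (x) : (extVertex S w x).length = w.length + 1 := by
  rcases x with ⟨_, ⟨c, rfl⟩, _⟩ | ⟨_, ⟨a, rfl⟩, _⟩ <;> simp [extVertex]

lemma rauzyGPath_of_extGraph_edge {l : leftExts S (letterWords A) w}
    {r : rightExts S (letterWords A) w} (h : l.val ++ w ++ r.val ∈ S) :
    RauzyGPath S (w.length + 1) (extVertex S w (.inl l)) (extVertex S w (.inr r))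
      ((extLabel S w (.inl l))⁻¹ * extLabel S w (.inr r)) := by
  obtain ⟨_, ⟨c, rfl⟩, hcw⟩ := l
  obtain ⟨_, ⟨a, rfl⟩, hwa⟩ := r
  simpa [extVertex, extLabel, toFG] using
    RauzyGPath.single (rauzyAdj_cons_append_singleton hcw hwa (by simpa using h))

lemma rauzyGPath_of_extGraph_adj {x y} (h : (EGraph S w).Adj x y) :
    RauzyGPath S (w.length + 1) (extVertex S w x) (extVertex S w y)
      ((extLabel S w x)⁻¹ * extLabel S w y) := by
  rcases h with ⟨l, r, rfl, rfl, h⟩ | ⟨l, r, rfl, rfl, h⟩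
  · exact rauzyGPath_of_extGraph_edge h
  · simpa using (rauzyGPath_of_extGraph_edge h).symm

lemma rauzyGPath_of_extGraph_walk {x y} (p : (EGraph S w).Walk x y) :
    RauzyGPath S (w.length + 1) (extVertex S w x) (extVertex S w y)
      ((extLabel S w x)⁻¹ * extLabel S w y) := by
  induction p with
  | nil => simpa using RauzyGPath.nil _ (extVertex_mem _) (length_extVertex _)
  | cons h _ ih => simpa [mul_assoc] using (rauzyGPath_of_extGraph_adj h).trans ih

lemma rauzyGPath_cons_cons (hconn : ∀ w ∈ S, (EGraph S w).Connected) (hw : w ∈ S) {b b' : A}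
    (hb : b :: w ∈ S) (hb' : b' :: w ∈ S) : RauzyGPath S (w.length + 1) (b :: w) (b' :: w) 1 := by
  obtain ⟨p⟩ := (hconn w hw).preconnected (.inl ⟨[b], ⟨b, rfl⟩, hb⟩) (.inl ⟨[b'], ⟨b', rfl⟩, hb'⟩)
  simpa [extVertex, extLabel] using rauzyGPath_of_extGraph_walk p

end ExtensionGraph

lemma RauzyGPath.lift (hS : SConn S) {n : ℕ} {x y : List A} {g : FreeGroup A}
    (p : RauzyGPath S n x y g) {b : A} (hb : b :: x ∈ S) :
    ∃ b' : A, b' :: y ∈ S ∧ RauzyGPath S (n + 1) (b :: x) (b' :: y) g := by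
  induction p with
  | nil _ hl => exact ⟨b, hb, .nil _ hb (by simp [hl])⟩
  | fwd _ hadj ih =>
    obtain ⟨b', hb', q⟩ := ih
    obtain ⟨c, d, hadj'⟩ := hadj.lift hS.1
    obtain ⟨hy, rfl, -⟩ := hadj
    have fibre := rauzyGPath_cons_cons hS.2 hy hb' hadj'.1
    exact ⟨d, hadj'.2.2.1, by simpa using (q.trans fibre).fwd hadj'⟩
  | bwd _ hadj ih =>
    obtain ⟨b', hb', q⟩ := ih
    obtain ⟨c, d, hadj'⟩ := hadj.lift hS.1
    obtain ⟨-, -, hy, rfl, -⟩ := hadj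
    have fibre := rauzyGPath_cons_cons hS.2 hy hb' hadj'.2.2.1
    exact ⟨c, hadj'.1, by simpa using (q.trans fibre).bwd hadj'⟩

lemma rauzyGPath_nil_nil (hnil : [] ∈ S) (hA : ∀ a : A, [a] ∈ S) (g : FreeGroup A) :
    RauzyGPath S 0 [] [] g := by
  have loop (a : A) : RauzyAdj S 0 [] a [] := ⟨hnil, rfl, hnil, rfl, hA a, a, rfl⟩
  induction g using FreeGroup.induction_on with
  | C1 => exact .nil [] hnil rfl
  | of a => exact .single (loop a)
  | inv_of a _ => exact .single_inv (loop a)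
  | mul g h hg hh => exact hg.trans hh

lemma rauzyGPath_self (hS : SConn S) (hA : ∀ a : A, [a] ∈ S) {v : List A} (hv : v ∈ S)
    (g : FreeGroup A) : RauzyGPath S v.length v v g := by
  induction v with
  | nil => exact rauzyGPath_nil_nil hv hA g
  | cons b w ih =>
    have hw : w ∈ S := hS.1.1.mem_of_append_right (u := [b]) hv
    obtain ⟨b', hb', q⟩ := (ih hw).lift hS hv
    simpa using q.trans (rauzyGPath_cons_cons hS.2 hw hb' hv)

end

theorem statement5_general {A : Type*} (S : Set (List A))
    (hconn : SConn S) (hA : ∀ a : A, [a] ∈ S) (n : ℕ) (v : List A)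
    (hv : v ∈ S) (hlen : v.length = n) :
    {g : FreeGroup A | RauzyGPath S n v v g} = Set.univ := by
  subst hlen
  exact Set.eq_univ_of_forall (rauzyGPath_self hconn hA hv)

/-- In a recurrent connected set containing the alphabet, the group described by any Rauzy
graph with respect to any of its vertices is the whole free group on `A`. -/
theorem statement5 {A : Type*} [Fintype A] (S : Set (List A)) (hrec : Recurrent S)
    (hconn : SConn S) (hA : ∀ a : A, [a] ∈ S) (n : ℕ) (v : List A)
    (hv : v ∈ S) (hlen : v.length = n) :
    {g : FreeGroup A | RauzyGPath S n v v g} = Set.univ :=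
  statement5_general S hconn hA n v hv hlen
end
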